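/- arXiv:1611.08241 — 3 statements merged into one kernel-verified Lean document; each statement's English description precedes it below -/
import Mathlib

section
/- For finite abelian p-groups, the Hall product is associative: for all finite abelian groups A, B, C, D, the sum over isomorphism classes [E] of t(D,A,E)·t(E,B,C) equals the sum over isomorphism classes [F] of t(F,A,B)·t(D,F,C), where t(C,A,B) denotes the number of subgroups A' ⊆ C with A' ≅ A and C/A' ≅ B. -/
/-- The Hall number `t(C, A, B)`: the number of subgroups `A' ⊆ C` with
`A' ≅ A` and `C ⧸ A' ≅ B`. -/
noncomputable def hallNumber (C A B : Type) [CommGroup C] [CommGroup A] [CommGroup B] : ℕ :=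
  Nat.card {A' : Subgroup C // Nonempty (A' ≃* A) ∧ Nonempty ((C ⧸ A') ≃* B)}

section Aux

/-- Invariance of the Hall number under isomorphism in all three slots. -/
lemma hallNumber_congr {K K' A A' B B' : Type} [CommGroup K] [CommGroup K'] [CommGroup A]
    [CommGroup A'] [CommGroup B] [CommGroup B']
    (eK : K ≃* K') (eA : A ≃* A') (eB : B ≃* B') :
    hallNumber K A B = hallNumber K' A' B' := by
  apply Nat.card_congr
  refine eK.mapSubgroup.toEquiv.subtypeEquiv fun H => ?_
  have e1 : H ≃* (eK.mapSubgroup H) := eK.subgroupMap H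
  have e2 : (K ⧸ H) ≃* (K' ⧸ (eK.mapSubgroup H : Subgroup K')) :=
    QuotientGroup.congr H _ eK rfl
  constructor
  · rintro ⟨⟨f1⟩, ⟨f2⟩⟩
    exact ⟨⟨(e1.symm.trans f1).trans eA⟩, ⟨(e2.symm.trans f2).trans eB⟩⟩
  · rintro ⟨⟨f1⟩, ⟨f2⟩⟩
    exact ⟨⟨(e1.trans f1).trans eA.symm⟩, ⟨(e2.trans f2).trans eB.symm⟩⟩

variable {D : Type} [CommGroup D]

/-- The image of a subgroup in a quotient is isomorphic to the corresponding
relative quotient. -/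
noncomputable def mapMk'Equiv (N X : Subgroup D) :
    (X ⧸ N.subgroupOf X) ≃* (X.map (QuotientGroup.mk' N)) :=
  (QuotientGroup.quotientMulEquivOfEq (by
      rw [Subgroup.subgroupOf, ← MonoidHom.comap_ker, QuotientGroup.ker_mk'])).symm.symm.trans <|
  (QuotientGroup.quotientKerEquivRange ((QuotientGroup.mk' N).comp X.subtype)).trans
  (MulEquiv.subgroupCongr (by
      rw [MonoidHom.range_comp, Subgroup.range_subtype]))

/-- Correspondence theorem, as an equivalence of subtypes. -/
noncomputable def corrEquiv (N : Subgroup D) (B C : Type) [CommGroup B] [CommGroup C] :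
    {X : Subgroup D // N ≤ X ∧ Nonempty ((X ⧸ N.subgroupOf X) ≃* B) ∧
        Nonempty ((D ⧸ X) ≃* C)} ≃
    {Y : Subgroup (D ⧸ N) // Nonempty (Y ≃* B) ∧ Nonempty (((D ⧸ N) ⧸ Y) ≃* C)} where
  toFun X := ⟨X.1.map (QuotientGroup.mk' N), by
    obtain ⟨X, hle, ⟨f1⟩, ⟨f2⟩⟩ := X
    exact ⟨⟨(mapMk'Equiv N X).symm.trans f1⟩,
      ⟨(QuotientGroup.quotientQuotientEquivQuotient N X hle).trans f2⟩⟩⟩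
  invFun Y := ⟨Y.1.comap (QuotientGroup.mk' N), by
    obtain ⟨Y, ⟨f1⟩, ⟨f2⟩⟩ := Y
    have hle : N ≤ Y.comap (QuotientGroup.mk' N) := by
      intro n hn
      have h1 : (QuotientGroup.mk' N) n = 1 := (QuotientGroup.eq_one_iff n).2 hn
      rw [Subgroup.mem_comap, h1]; exact Y.one_mem
    have hmap : (Y.comap (QuotientGroup.mk' N)).map (QuotientGroup.mk' N) = Y :=
      Subgroup.map_comap_eq_self_of_surjective (QuotientGroup.mk'_surjective N) Y
    refine ⟨hle, ⟨((mapMk'Equiv N _).trans (MulEquiv.subgroupCongr hmap)).trans f1⟩,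
      ⟨((QuotientGroup.quotientQuotientEquivQuotient N _ hle).symm.trans
        ((QuotientGroup.quotientMulEquivOfEq (by rw [hmap]))) ).trans f2⟩⟩⟩
  left_inv := by
    rintro ⟨X, hle, _⟩
    ext : 2
    simp only
    rw [Subgroup.comap_map_eq, QuotientGroup.ker_mk', sup_eq_left.2 hle]
  right_inv := by
    rintro ⟨Y, _⟩
    exact Subtype.ext (Subgroup.map_comap_eq_self_of_surjective (QuotientGroup.mk'_surjective N) Y)

/-- A subgroup contained in `X` corresponds to a subgroup of `X`. -/
noncomputable def subEquiv (X : Subgroup D) (A B : Type) [CommGroup A] [CommGroup B] :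
    {A' : Subgroup D // A' ≤ X ∧ Nonempty (A' ≃* A) ∧
        Nonempty ((X ⧸ A'.subgroupOf X) ≃* B)} ≃
    {A'' : Subgroup X // Nonempty (A'' ≃* A) ∧ Nonempty ((X ⧸ A'') ≃* B)} where
  toFun A' := ⟨A'.1.subgroupOf X, by
    obtain ⟨A', hle, ⟨f1⟩, hf2⟩ := A'
    exact ⟨⟨(Subgroup.subgroupOfEquivOfLe hle).trans f1⟩, hf2⟩⟩
  invFun A'' := ⟨A''.1.map X.subtype, by
    obtain ⟨A'', ⟨f1⟩, ⟨f2⟩⟩ := A''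
    have hsub : (A''.map X.subtype).subgroupOf X = A'' :=
      Subgroup.comap_map_eq_self_of_injective X.subtype_injective A''
    exact ⟨Subgroup.map_subtype_le A'',
      ⟨((A''.equivMapOfInjective X.subtype X.subtype_injective).symm.trans f1).symm.symm⟩,
      ⟨(QuotientGroup.quotientMulEquivOfEq hsub).trans f2⟩⟩⟩
  left_inv := by
    rintro ⟨A', hle, _⟩
    ext : 2
    simp only
    rw [Subgroup.subgroupOf_map_subtype, inf_eq_left.2 hle]
  right_inv := by
    rintro ⟨A'', _⟩
    exact Subtype.ext (Subgroup.comap_map_eq_self_of_injective X.subtype_injective A'')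

end Aux

section Counting

/-- The set of pairs `(A', X)` of subgroups of `D` with `A' ≤ X`, `A' ≅ A`,
`X/A' ≅ B`, `D/X ≅ C`. -/
abbrev HallPairs (A B C D : Type) [CommGroup A] [CommGroup B] [CommGroup C] [CommGroup D] :=
  {p : Subgroup D × Subgroup D // p.1 ≤ p.2 ∧ Nonempty (↥p.1 ≃* A) ∧
      Nonempty ((↥p.2 ⧸ p.1.subgroupOf p.2) ≃* B) ∧ Nonempty ((D ⧸ p.2) ≃* C)}

lemma card_eq_sum_card_fiber {α ι : Type} [Finite α] [Fintype ι] (f : α → ι) :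
    Nat.card α = ∑ i, Nat.card {a // f a = i} := by
  classical
  cases nonempty_fintype α
  simp only [Nat.card_eq_fintype_card]
  rw [← Fintype.card_congr (Equiv.sigmaFiberEquiv f)]
  simp

lemma nat_card_sigma {α : Type} [Fintype α] (β : α → Type) [∀ a, Finite (β a)] :
    Nat.card (Σ a, β a) = ∑ a, Nat.card (β a) := by
  classical
  haveI := fun a => Fintype.ofFinite (β a)
  simp [Nat.card_eq_fintype_card]

variable (A B C D E : Type) [CommGroup A] [CommGroup B] [CommGroup C] [CommGroup D] [CommGroup E]

/-- Decomposition of the fiber of `HallPairs` over the isomorphism class of `D ⧸ A'`. -/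
def sigL : {p : HallPairs A B C D // Nonempty ((D ⧸ p.1.1) ≃* E)} ≃
    Σ A' : {A' : Subgroup D // Nonempty (↥A' ≃* A) ∧ Nonempty ((D ⧸ A') ≃* E)},
      {X : Subgroup D // A'.1 ≤ X ∧ Nonempty ((↥X ⧸ A'.1.subgroupOf X) ≃* B) ∧
          Nonempty ((D ⧸ X) ≃* C)} where
  toFun p := ⟨⟨p.1.1.1, p.1.2.2.1, p.2⟩, ⟨p.1.1.2, p.1.2.1, p.1.2.2.2.1, p.1.2.2.2.2⟩⟩
  invFun q := ⟨⟨(q.1.1, q.2.1), q.2.2.1, q.1.2.1, q.2.2.2.1, q.2.2.2.2⟩, q.1.2.2⟩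
  left_inv := fun ⟨⟨⟨a, x⟩, h⟩, hi⟩ => rfl
  right_inv := fun ⟨⟨a, ha⟩, ⟨x, hx⟩⟩ => rfl

/-- Decomposition of the fiber of `HallPairs` over the isomorphism class of `X`. -/
def sigR : {p : HallPairs A B C D // Nonempty (↥p.1.2 ≃* E)} ≃
    Σ X : {X : Subgroup D // Nonempty (↥X ≃* E) ∧ Nonempty ((D ⧸ X) ≃* C)},
      {A' : Subgroup D // A' ≤ X.1 ∧ Nonempty (↥A' ≃* A) ∧
          Nonempty ((↥X.1 ⧸ A'.subgroupOf X.1) ≃* B)} where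
  toFun p := ⟨⟨p.1.1.2, p.2, p.1.2.2.2.2⟩, ⟨p.1.1.1, p.1.2.1, p.1.2.2.1, p.1.2.2.2.1⟩⟩
  invFun q := ⟨⟨(q.2.1, q.1.1), q.2.2.1, q.2.2.2.1, q.2.2.2.2, q.1.2.2⟩, q.1.2.1⟩
  left_inv := fun ⟨⟨⟨a, x⟩, h⟩, hi⟩ => rfl
  right_inv := fun ⟨⟨x, hx⟩, ⟨a, ha⟩⟩ => rfl

end Counting

section Main

variable (A B C D : Type) [CommGroup A] [CommGroup B] [CommGroup C] [CommGroup D]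
  [Finite A] [Finite B] [Finite C] [Finite D]
  (ι : Type) [Fintype ι] (G : ι → Type) [∀ i, CommGroup (G i)] [∀ i, Finite (G i)]

lemma hall_left
    (hdistinct : ∀ i j : ι, Nonempty (G i ≃* G j) → i = j)
    (hcover : ∀ (E : Type) [CommGroup E] [Finite E],
      Nat.card E ∣ Nat.card D → ∃ i : ι, Nonempty (E ≃* G i)) :
    Nat.card (HallPairs A B C D) =
      ∑ i : ι, hallNumber D A (G i) * hallNumber (G i) B C := by
  classical
  haveI : Finite (Subgroup D) := Finite.of_injective _ SetLike.coe_injective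
  set f : HallPairs A B C D → ι :=
    fun p => (hcover (D ⧸ p.1.1) (Subgroup.card_quotient_dvd_card p.1.1)).choose with hf
  have hfspec : ∀ p, Nonempty ((D ⧸ p.1.1) ≃* G (f p)) :=
    fun p => (hcover (D ⧸ p.1.1) (Subgroup.card_quotient_dvd_card p.1.1)).choose_spec
  rw [card_eq_sum_card_fiber f]
  refine Finset.sum_congr rfl fun i _ => ?_
  have h1 : {p : HallPairs A B C D // f p = i} ≃
      {p : HallPairs A B C D // Nonempty ((D ⧸ p.1.1) ≃* G i)} :=
    Equiv.subtypeEquivRight fun p => by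
      constructor
      · rintro rfl; exact hfspec p
      · rintro ⟨e⟩; exact (hdistinct i (f p) ⟨e.symm.trans (hfspec p).some⟩).symm
  rw [Nat.card_congr (h1.trans (sigL A B C D (G i)))]
  haveI := Fintype.ofFinite
    {A' : Subgroup D // Nonempty (↥A' ≃* A) ∧ Nonempty ((D ⧸ A') ≃* G i)}
  rw [nat_card_sigma]
  have hconst : ∀ A' : {A' : Subgroup D // Nonempty (↥A' ≃* A) ∧ Nonempty ((D ⧸ A') ≃* G i)},
      Nat.card {X : Subgroup D // A'.1 ≤ X ∧ Nonempty ((↥X ⧸ A'.1.subgroupOf X) ≃* B) ∧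
          Nonempty ((D ⧸ X) ≃* C)} = hallNumber (G i) B C := by
    intro A'
    rw [Nat.card_congr (corrEquiv A'.1 B C)]
    exact hallNumber_congr A'.2.2.some (MulEquiv.refl B) (MulEquiv.refl C)
  rw [Finset.sum_congr rfl fun A' _ => hconst A', Finset.sum_const, smul_eq_mul,
    Finset.card_univ]
  congr 1
  rw [hallNumber, Nat.card_eq_fintype_card]

lemma hall_right
    (hdistinct : ∀ i j : ι, Nonempty (G i ≃* G j) → i = j)
    (hcover : ∀ (E : Type) [CommGroup E] [Finite E],
      Nat.card E ∣ Nat.card D → ∃ i : ι, Nonempty (E ≃* G i)) :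
    Nat.card (HallPairs A B C D) =
      ∑ i : ι, hallNumber (G i) A B * hallNumber D (G i) C := by
  classical
  haveI : Finite (Subgroup D) := Finite.of_injective _ SetLike.coe_injective
  set f : HallPairs A B C D → ι :=
    fun p => (hcover ↥p.1.2 (Subgroup.card_subgroup_dvd_card p.1.2)).choose with hf
  have hfspec : ∀ p : HallPairs A B C D, Nonempty (↥p.1.2 ≃* G (f p)) :=
    fun p => (hcover ↥p.1.2 (Subgroup.card_subgroup_dvd_card p.1.2)).choose_spec
  rw [card_eq_sum_card_fiber f]
  refine Finset.sum_congr rfl fun i _ => ?_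
  have h1 : {p : HallPairs A B C D // f p = i} ≃
      {p : HallPairs A B C D // Nonempty (↥p.1.2 ≃* G i)} :=
    Equiv.subtypeEquivRight fun p => by
      constructor
      · rintro rfl; exact hfspec p
      · rintro ⟨e⟩; exact (hdistinct i (f p) ⟨e.symm.trans (hfspec p).some⟩).symm
  rw [Nat.card_congr (h1.trans (sigR A B C D (G i)))]
  haveI := Fintype.ofFinite
    {X : Subgroup D // Nonempty (↥X ≃* G i) ∧ Nonempty ((D ⧸ X) ≃* C)}
  rw [nat_card_sigma]
  have hconst : ∀ X : {X : Subgroup D // Nonempty (↥X ≃* G i) ∧ Nonempty ((D ⧸ X) ≃* C)},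
      Nat.card {A' : Subgroup D // A' ≤ X.1 ∧ Nonempty (↥A' ≃* A) ∧
          Nonempty ((↥X.1 ⧸ A'.subgroupOf X.1) ≃* B)} = hallNumber (G i) A B := by
    intro X
    rw [Nat.card_congr (subEquiv X.1 A B)]
    exact hallNumber_congr X.2.1.some (MulEquiv.refl A) (MulEquiv.refl B)
  rw [Finset.sum_congr rfl fun X _ => hconst X, Finset.sum_const, smul_eq_mul,
    Finset.card_univ, mul_comm]
  congr 1
  rw [hallNumber, Nat.card_eq_fintype_card]

end Main

/-- Associativity of the Hall product: given a finite family `G i` of finite abelian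
groups containing exactly one representative of each isomorphism class of finite
abelian groups whose order divides `|D|` (all isomorphism classes that can contribute
a nonzero term), we have
`Σ_[E] t(D,A,E)·t(E,B,C) = Σ_[F] t(F,A,B)·t(D,F,C)`. -/
theorem stmt_0 (A B C D : Type) [CommGroup A] [CommGroup B] [CommGroup C] [CommGroup D]
    [Finite A] [Finite B] [Finite C] [Finite D]
    (ι : Type) [Fintype ι] (G : ι → Type) [∀ i, CommGroup (G i)] [∀ i, Finite (G i)]
    (hdistinct : ∀ i j : ι, Nonempty (G i ≃* G j) → i = j)
    (hcover : ∀ (E : Type) [CommGroup E] [Finite E],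
      Nat.card E ∣ Nat.card D → ∃ i : ι, Nonempty (E ≃* G i)) :
    ∑ i : ι, hallNumber D A (G i) * hallNumber (G i) B C =
      ∑ i : ι, hallNumber (G i) A B * hallNumber D (G i) C := by
  rw [← hall_left A B C D ι G hdistinct hcover, hall_right A B C D ι G hdistinct hcover]
end

section
/- The free ℤ-module on isomorphism classes of finite abelian p-groups, equipped with the product [A]·[B] := Σ_[C] t(C,A,B)·[C], is an associative unital ℤ-algebra with unit the class of the trivial group. -/
/-- A bundled finite abelian `p`-group. -/
structure FinAbPGroup (p : ℕ) where
  carrier : Type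
  [commGroup : CommGroup carrier]
  [finite : Finite carrier]
  isPGroup : IsPGroup p carrier

attribute [instance] FinAbPGroup.commGroup FinAbPGroup.finite

instance FinAbPGroup.setoid (p : ℕ) : Setoid (FinAbPGroup p) where
  r X Y := Nonempty (X.carrier ≃* Y.carrier)
  iseqv := ⟨fun _ => ⟨MulEquiv.refl _⟩, fun ⟨e⟩ => ⟨e.symm⟩, fun ⟨e⟩ ⟨f⟩ => ⟨e.trans f⟩⟩

/-- Isomorphism classes of finite abelian `p`-groups. -/
def FinAbPClass (p : ℕ) : Type 1 := Quotient (FinAbPGroup.setoid p)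

/-- The class of the trivial group. -/
def trivialClass (p : ℕ) : FinAbPClass p :=
  ⟦{ carrier := PUnit, isPGroup := fun _ => ⟨0, Subsingleton.elim _ _⟩ }⟧

/-- The Hall number on isomorphism classes (via choice of representatives). -/
noncomputable def hallNumberClass {p : ℕ} (c a b : FinAbPClass p) : ℕ :=
  hallNumber (Quotient.out c).carrier (Quotient.out a).carrier (Quotient.out b).carrier


/-!
Write `[X]` for the class of a finite abelian `p`-group `X`. Expanding `t(C, A, B)` as a count
of subgroups shows that the coefficient of `[C]` in `x · y` is `∑_{N ≤ C} x[N] · y[C/N]`.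
Applying this twice, both `(x · y) · z` and `x · (y · z)` have coefficient
`∑_{N ≤ M ≤ C} x[N] · y[M/N] · z[C/M]` at `[C]`: on the left the flag `N ≤ M` is read through
subgroups `N` of `M`, on the right through subgroups `M/N` of `C/N` (correspondence theorem).
The trivial group is the unit because the only subgroup with trivial class is `⊥` and the only
one with trivial quotient is `⊤`.
-/

attribute [local instance] Fintype.ofFinite

open Finset
open scoped Classical

namespace QuotientGroup

variable {G : Type*} [Group G]

noncomputable def quotientSubgroupOfEquivMap (N M : Subgroup G) [N.Normal] :
    M ⧸ N.subgroupOf M ≃* M.map (mk' N) :=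
  (quotientMulEquivOfEq (by rw [MonoidHom.ker_domRestrict, ker_mk'])).trans
    ((quotientKerEquivRange ((mk' N).domRestrict M)).trans
      (MulEquiv.subgroupCongr (MonoidHom.domRestrict_range M (mk' N))))

theorem sum_subgroup_quotient_eq_sum_ge [Finite G] {β : Type*} [AddCommMonoid β]
    (N : Subgroup G) [N.Normal] (f : Subgroup (G ⧸ N) → β) :
    ∑ K, f K = ∑ M with N ≤ M, f (M.map (mk' N)) := by
  refine (Fintype.sum_equiv (comapMk'OrderIso N).toEquiv _ (fun M => f (M.1.map (mk' N)))
    fun K => ?_).trans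
      (Finset.sum_subtype _ (fun M => by simp) (fun M : Subgroup G => f (M.map (mk' N)))).symm
  simp [comapMk'OrderIso, Subgroup.map_comap_eq_self_of_surjective (mk'_surjective N)]

end QuotientGroup

namespace Subgroup

theorem sum_subgroup_eq_sum_le {G : Type*} [Group G] [Finite G] {β : Type*} [AddCommMonoid β]
    (M : Subgroup G) (f : Subgroup M → β) :
    ∑ N', f N' = ∑ N with N ≤ M, f (N.subgroupOf M) := by
  refine (Fintype.sum_equiv (MapSubtype.orderIso M).toEquiv _ (fun N => f (N.1.subgroupOf M))
    fun N' => ?_).trans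
      (Finset.sum_subtype _ (fun N => by simp) (fun N : Subgroup G => f (N.subgroupOf M))).symm
  simp [subgroupOf, comap_map_eq_self_of_injective M.subtype_injective]

end Subgroup

namespace FinAbPGroup

variable {p : ℕ}

def toClass (X : FinAbPGroup p) : FinAbPClass p := ⟦X⟧

abbrev subgroup (X : FinAbPGroup p) (H : Subgroup X.carrier) : FinAbPGroup p where
  carrier := H
  isPGroup := X.isPGroup.to_subgroup H

abbrev quotient (X : FinAbPGroup p) (H : Subgroup X.carrier) : FinAbPGroup p where
  carrier := X.carrier ⧸ H
  isPGroup := X.isPGroup.to_quotient H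

theorem toClass_eq_of_mulEquiv {X Y : FinAbPGroup p} (e : X.carrier ≃* Y.carrier) :
    X.toClass = Y.toClass :=
  Quotient.sound ⟨e⟩

theorem toClass_out (X : FinAbPGroup p) :
    Nonempty (X.toClass.out.carrier ≃* X.carrier) :=
  Quotient.mk_out X

theorem toClass_eq_iff (X : FinAbPGroup p) (c : FinAbPClass p) :
    X.toClass = c ↔ Nonempty (X.carrier ≃* c.out.carrier) :=
  Quotient.mk_eq_iff_out

theorem toClass_eq_trivialClass_iff (X : FinAbPGroup p) :
    X.toClass = trivialClass p ↔ Subsingleton X.carrier := by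
  refine ⟨fun h => (Quotient.exact h).some.toEquiv.subsingleton, fun h => ?_⟩
  have : Unique X.carrier := uniqueOfSubsingleton 1
  exact toClass_eq_of_mulEquiv MulEquiv.ofUnique

theorem toClass_subgroup_eq_trivialClass_iff (X : FinAbPGroup p) (H : Subgroup X.carrier) :
    (X.subgroup H).toClass = trivialClass p ↔ H = ⊥ := by
  rw [toClass_eq_trivialClass_iff]
  constructor
  · intro
    exact H.eq_bot_of_subsingleton
  · rintro rfl
    infer_instance

theorem toClass_quotient_eq_trivialClass_iff (X : FinAbPGroup p) (H : Subgroup X.carrier) :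
    (X.quotient H).toClass = trivialClass p ↔ H = ⊤ :=
  (toClass_eq_trivialClass_iff _).trans QuotientGroup.subsingleton_iff

theorem toClass_quotient_bot (X : FinAbPGroup p) : (X.quotient ⊥).toClass = X.toClass :=
  toClass_eq_of_mulEquiv QuotientGroup.quotientBot

theorem toClass_subgroup_top (X : FinAbPGroup p) : (X.subgroup ⊤).toClass = X.toClass :=
  toClass_eq_of_mulEquiv Subgroup.topEquiv

section Flags

variable (X : FinAbPGroup p) {N M : Subgroup X.carrier}

theorem toClass_subgroup_subgroupOf (h : N ≤ M) :
    ((X.subgroup M).subgroup (N.subgroupOf M)).toClass = (X.subgroup N).toClass :=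
  toClass_eq_of_mulEquiv (Subgroup.subgroupOfEquivOfLe h)

theorem toClass_quotient_subgroupOf :
    ((X.subgroup M).quotient (N.subgroupOf M)).toClass =
      ((X.quotient N).subgroup (M.map (QuotientGroup.mk' N))).toClass :=
  toClass_eq_of_mulEquiv (QuotientGroup.quotientSubgroupOfEquivMap N M)

theorem toClass_quotient_map_mk' (h : N ≤ M) :
    ((X.quotient N).quotient (M.map (QuotientGroup.mk' N))).toClass =
      (X.quotient M).toClass :=
  toClass_eq_of_mulEquiv (QuotientGroup.quotientQuotientEquivQuotient N M h)

end Flags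

theorem card_toClass_out (X : FinAbPGroup p) :
    Nat.card X.toClass.out.carrier = Nat.card X.carrier :=
  Nat.card_congr (toClass_out X).some.toEquiv

end FinAbPGroup

namespace FinAbPClass

variable {p : ℕ}

open FinAbPGroup

theorem finite_setOf_card_eq (n : ℕ) :
    {c : FinAbPClass p | Nat.card c.out.carrier = n}.Finite := by
  let e (c : {c : FinAbPClass p | Nat.card c.out.carrier = n}) := Finite.equivFinOfCardEq c.2
  -- a class of order `n` is determined by a multiplication table on `Fin n`
  let table c : Fin n → Fin n → Fin n := fun i j => e c ((e c).symm i * (e c).symm j)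
  refine Set.finite_coe_iff.mp (Finite.of_injective table fun c d h => Subtype.ext ?_)
  refine Quotient.out_equiv_out.mp ⟨MulEquiv.mk' ((e c).trans (e d).symm) fun x y => ?_⟩
  have := congrFun₂ h (e c x) (e c y)
  simp only [table, Equiv.symm_apply_apply] at this
  simp [this]

noncomputable def hallCoeff (x y : FinAbPClass p →₀ ℤ) (X : FinAbPGroup p) : ℤ :=
  ∑ N : Subgroup X.carrier, x (X.subgroup N).toClass * y (X.quotient N).toClass

theorem hallCoeff_congr (x y : FinAbPClass p →₀ ℤ) {X Y : FinAbPGroup p}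
    (e : X.carrier ≃* Y.carrier) : hallCoeff x y X = hallCoeff x y Y :=
  Fintype.sum_equiv e.mapSubgroup.toEquiv _ _ fun N => by
    rw [toClass_eq_of_mulEquiv (Y := Y.subgroup (e.mapSubgroup N)) (e.subgroupMap N),
      toClass_eq_of_mulEquiv (X := X.quotient N) (Y := Y.quotient (e.mapSubgroup N))
        (QuotientGroup.congr N _ e rfl)]
    rfl

theorem finite_support_hallCoeff (x y : FinAbPClass p →₀ ℤ) :
    (Function.support fun c : FinAbPClass p => hallCoeff x y c.out).Finite := by
  let orders := (x.support ×ˢ y.support).image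
    fun ab => Nat.card ab.1.out.carrier * Nat.card ab.2.out.carrier
  refine (orders.finite_toSet.biUnion fun n _ => finite_setOf_card_eq n).subset fun c hc => ?_
  obtain ⟨N, -, hN⟩ := Finset.exists_ne_zero_of_sum_ne_zero hc
  have hxy :
      ((c.out.subgroup N).toClass, (c.out.quotient N).toClass) ∈ x.support ×ˢ y.support :=
    Finset.mem_product.mpr ⟨Finsupp.mem_support_iff.mpr (left_ne_zero_of_mul hN),
      Finsupp.mem_support_iff.mpr (right_ne_zero_of_mul hN)⟩
  refine Set.mem_biUnion (Finset.mem_coe.mpr (Finset.mem_image_of_mem _ hxy)) ?_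
  simp only [Set.mem_ofPred_eq, card_toClass_out]
  exact (Subgroup.card_eq_card_quotient_mul_card_subgroup N).trans (mul_comm _ _)

noncomputable def hallMul :
    (FinAbPClass p →₀ ℤ) →ₗ[ℤ] (FinAbPClass p →₀ ℤ) →ₗ[ℤ] (FinAbPClass p →₀ ℤ) :=
  LinearMap.mk₂ ℤ
    (fun x y => Finsupp.ofSupportFinite _ (finite_support_hallCoeff x y))
    (fun x x' y => by
      ext
      simp only [Finsupp.ofSupportFinite_coe, Finsupp.add_apply, hallCoeff, add_mul,
        sum_add_distrib])
    (fun r x y => by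
      ext
      simp only [Finsupp.ofSupportFinite_coe, Finsupp.smul_apply, hallCoeff, smul_eq_mul, mul_assoc,
        mul_sum])
    (fun x y y' => by
      ext
      simp only [Finsupp.ofSupportFinite_coe, Finsupp.add_apply, hallCoeff, mul_add,
        sum_add_distrib])
    (fun r x y => by
      ext
      simp only [Finsupp.ofSupportFinite_coe, Finsupp.smul_apply, hallCoeff, smul_eq_mul,
        mul_left_comm, mul_sum])

theorem hallMul_apply (x y : FinAbPClass p →₀ ℤ) (c : FinAbPClass p) :
    hallMul x y c = hallCoeff x y c.out :=
  rfl

theorem hallMul_apply_toClass (x y : FinAbPClass p →₀ ℤ) (X : FinAbPGroup p) :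
    hallMul x y X.toClass = hallCoeff x y X :=
  hallCoeff_congr x y (toClass_out X).some

theorem hallCoeff_single_single (a b : FinAbPClass p) (X : FinAbPGroup p) :
    hallCoeff (Finsupp.single a 1) (Finsupp.single b 1) X =
      hallNumber X.carrier a.out.carrier b.out.carrier := by
  simp only [hallCoeff, Finsupp.single_apply, eq_comm (a := a), eq_comm (a := b), toClass_eq_iff,
    ite_zero_mul_ite_zero, mul_one, Finset.sum_boole, hallNumber, Nat.card_eq_fintype_card,
    Fintype.card_subtype]

theorem hallCoeff_single_trivialClass_left (y : FinAbPClass p →₀ ℤ) (X : FinAbPGroup p) :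
    hallCoeff (Finsupp.single (trivialClass p) 1) y X = y X.toClass := by
  rw [hallCoeff, Finset.sum_eq_single ⊥ (fun N _ hN => ?_) (by simp),
    (toClass_subgroup_eq_trivialClass_iff X ⊥).mpr rfl, Finsupp.single_eq_same, one_mul,
    toClass_quotient_bot]
  rw [Finsupp.single_eq_of_ne (mt (toClass_subgroup_eq_trivialClass_iff X N).mp hN), zero_mul]

theorem hallCoeff_single_trivialClass_right (x : FinAbPClass p →₀ ℤ) (X : FinAbPGroup p) :
    hallCoeff x (Finsupp.single (trivialClass p) 1) X = x X.toClass := by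
  rw [hallCoeff, Finset.sum_eq_single ⊤ (fun N _ hN => ?_) (by simp),
    (toClass_quotient_eq_trivialClass_iff X ⊤).mpr rfl, Finsupp.single_eq_same, mul_one,
    toClass_subgroup_top]
  rw [Finsupp.single_eq_of_ne (mt (toClass_quotient_eq_trivialClass_iff X N).mp hN), mul_zero]

theorem hallCoeff_hallMul_left (x y z : FinAbPClass p →₀ ℤ) (X : FinAbPGroup p) :
    hallCoeff (hallMul x y) z X = ∑ M, ∑ N with N ≤ M, x (X.subgroup N).toClass *
      y ((X.quotient N).subgroup (M.map (QuotientGroup.mk' N))).toClass *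
        z (X.quotient M).toClass := by
  simp only [hallCoeff, hallMul_apply_toClass, Subgroup.sum_subgroup_eq_sum_le, sum_mul]
  refine sum_congr rfl fun M _ => sum_congr rfl fun N hN => ?_
  rw [toClass_subgroup_subgroupOf X (mem_filter.mp hN).2, toClass_quotient_subgroupOf]

theorem hallCoeff_hallMul_right (x y z : FinAbPClass p →₀ ℤ) (X : FinAbPGroup p) :
    hallCoeff x (hallMul y z) X = ∑ N, ∑ M with N ≤ M, x (X.subgroup N).toClass *
      y ((X.quotient N).subgroup (M.map (QuotientGroup.mk' N))).toClass *
        z (X.quotient M).toClass := by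
  simp only [hallCoeff, hallMul_apply_toClass, QuotientGroup.sum_subgroup_quotient_eq_sum_ge,
    mul_sum]
  refine sum_congr rfl fun N _ => sum_congr rfl fun M hM => ?_
  rw [toClass_quotient_map_mk' X (mem_filter.mp hM).2, mul_assoc]

theorem hallMul_assoc (x y z : FinAbPClass p →₀ ℤ) :
    hallMul (hallMul x y) z = hallMul x (hallMul y z) := by
  ext c
  rw [hallMul_apply, hallMul_apply, hallCoeff_hallMul_left, hallCoeff_hallMul_right]
  exact Finset.sum_comm' fun M N => by simp

theorem hallMul_single_trivialClass_left (y : FinAbPClass p →₀ ℤ) :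
    hallMul (Finsupp.single (trivialClass p) 1) y = y := by
  ext c
  rw [hallMul_apply, hallCoeff_single_trivialClass_left]
  exact congrArg y (Quotient.out_eq c)

theorem hallMul_single_trivialClass_right (x : FinAbPClass p →₀ ℤ) :
    hallMul x (Finsupp.single (trivialClass p) 1) = x := by
  ext c
  rw [hallMul_apply, hallCoeff_single_trivialClass_right]
  exact congrArg x (Quotient.out_eq c)

end FinAbPClass

theorem stmt_1_general (p : ℕ) :
    ∃ (mul : (FinAbPClass p →₀ ℤ) →ₗ[ℤ] (FinAbPClass p →₀ ℤ) →ₗ[ℤ] (FinAbPClass p →₀ ℤ))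
      (one : FinAbPClass p →₀ ℤ),
      (∀ a b c : FinAbPClass p,
        mul (Finsupp.single a 1) (Finsupp.single b 1) c = (hallNumberClass c a b : ℤ)) ∧
      (∀ x y z, mul (mul x y) z = mul x (mul y z)) ∧
      (∀ x, mul one x = x) ∧ (∀ x, mul x one = x) ∧
      one = Finsupp.single (trivialClass p) 1 :=
  ⟨FinAbPClass.hallMul, Finsupp.single (trivialClass p) 1,
    fun a b c => FinAbPClass.hallCoeff_single_single a b c.out, FinAbPClass.hallMul_assoc,
    FinAbPClass.hallMul_single_trivialClass_left, FinAbPClass.hallMul_single_trivialClass_right,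
    rfl⟩

/-- The free `ℤ`-module on isomorphism classes of finite abelian `p`-groups, with the
product determined on basis elements by `[A]·[B] := Σ_[C] t(C,A,B)·[C]`, is an
associative unital `ℤ`-algebra, with unit the class of the trivial group. -/
theorem stmt_1 (p : ℕ) [Fact p.Prime] :
    ∃ (mul : (FinAbPClass p →₀ ℤ) →ₗ[ℤ] (FinAbPClass p →₀ ℤ) →ₗ[ℤ] (FinAbPClass p →₀ ℤ))
      (one : FinAbPClass p →₀ ℤ),
      (∀ a b c : FinAbPClass p,
        mul (Finsupp.single a 1) (Finsupp.single b 1) c = (hallNumberClass c a b : ℤ)) ∧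
      (∀ x y z, mul (mul x y) z = mul x (mul y z)) ∧
      (∀ x, mul one x = x) ∧ (∀ x, mul x one = x) ∧
      one = Finsupp.single (trivialClass p) 1 :=
  stmt_1_general p
end

section
/- Let G be a finite group and E an irreducible complex representation of G ≀ S_n. If d ≥ n, then for any free G-representation V of rank d over ℂ, the vector space E ⊗_{ℂ[G≀S_n]} V^{⊗n} is nonzero. -/
open scoped TensorProduct

/-- The permutation action of `S_n` on `Gⁿ`. -/
def permMulAut (G : Type) [Group G] (n : ℕ) : Equiv.Perm (Fin n) →* MulAut (Fin n → G) :=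
  MonoidHom.mk' (fun σ => MulEquiv.arrowCongr σ (MulEquiv.refl G)) (fun a b => by ext; rfl)

/-- The wreath product `G ≀ S_n = Gⁿ ⋊ S_n`. -/
def Wreath (G : Type) [Group G] (n : ℕ) : Type :=
  SemidirectProduct (Fin n → G) (Equiv.Perm (Fin n)) (permMulAut G n)

instance (G : Type) [Group G] (n : ℕ) : Group (Wreath G n) :=
  inferInstanceAs (Group (SemidirectProduct _ _ _))

variable (G : Type) [Group G] [Finite G]
variable (V : Type) [AddCommGroup V] [Module ℂ V] (ρV : Representation ℂ G V)

/-- The action of the wreath product `G ≀ S_n` on `V^{⊗n}`: `Gⁿ` acts factorwise and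
`S_n` permutes the tensor factors. -/
noncomputable def wreathTensorAct (n : ℕ) (w : Wreath G n) :
    (⨂[ℂ] (_ : Fin n), V) →ₗ[ℂ] (⨂[ℂ] (_ : Fin n), V) :=
  (PiTensorProduct.map (fun i => ρV (w.left i))).comp
    (PiTensorProduct.reindex ℂ (fun _ : Fin n => V) w.right).toLinearMap

/-- `E ⊗_{ℂ[G≀Sₙ]} V^{⊗n}`, realized as the coinvariants of the diagonal
`G ≀ S_n`-action on `E ⊗_ℂ V^{⊗n}`. -/
noncomputable def schurWeylSpace (n : ℕ) (E : FDRep ℂ (Wreath G n)) :=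
  (E ⊗[ℂ] (⨂[ℂ] (_ : Fin n), V)) ⧸
    Submodule.span ℂ {x | ∃ (w : Wreath G n) (e : E) (t : ⨂[ℂ] (_ : Fin n), V),
      x = (E.ρ w e) ⊗ₜ[ℂ] (wreathTensorAct G V ρV n w t) - e ⊗ₜ[ℂ] t}

/-- The regular representation of `G` on `ℂ[G] = (G → ℂ)`. -/
noncomputable def regularRep (g : G) : (G → ℂ) →ₗ[ℂ] (G → ℂ) :=
  LinearMap.funLeft ℂ ℂ (fun x => g⁻¹ * x)

/-! The pure tensor `t = e₁ ⊗ ⋯ ⊗ eₙ`, where `eⱼ` is the unit `[1]` of the `j`-th summand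
`ℂ[G]` of `V ≅ ℂ[G]^d` (this needs `n ≤ d`), has a free `G ≀ Sₙ`-orbit: the coordinate functional
`μ` reading off the coefficient of `t` satisfies `μ (w • t) = δ_{w,1}`. Hence
`m ↦ ∑_g μ (g⁻¹ • m) [g]` is an equivariant map `V^{⊗n} → ℂ[G ≀ Sₙ]` sending `t` to `[1]`, and
composing with `E ⊗_{ℂ[G ≀ Sₙ]} ℂ[G ≀ Sₙ] ≅ E` shows that `e ⊗ t` survives in the coinvariants of
`E ⊗ V^{⊗n}` for every `e ≠ 0`. -/

namespace Representation

open MonoidAlgebra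

variable {k W E M : Type*} [CommRing k] [Group W] [Fintype W]
  [AddCommGroup E] [Module k E] [AddCommGroup M] [Module k M]

noncomputable def toLeftRegular (ρ : Representation k W M) (μ : M →ₗ[k] k) :
    IntertwiningMap ρ (leftRegular k W) where
  toLinearMap := ∑ g : W, lsingle g ∘ₗ μ ∘ₗ ρ g⁻¹
  isIntertwining' h := LinearMap.ext fun m => by
    simp only [LinearMap.comp_apply, LinearMap.sum_apply, map_sum, lsingle_apply,
      ofMulAction_single, smul_eq_mul]
    exact Fintype.sum_equiv (Equiv.mulLeft h⁻¹) _ _ fun g => by simp [mul_inv_rev]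

lemma toLeftRegular_apply (ρ : Representation k W M) (μ : M →ₗ[k] k) (m : M) :
    toLeftRegular ρ μ m = ∑ g : W, single g (μ (ρ g⁻¹ m)) := by
  simp [toLeftRegular, IntertwiningMap.coe_mk]

lemma toLeftRegular_apply_eq_single_one {ρ : Representation k W M} {μ : M →ₗ[k] k} {t : M}
    (h₁ : μ t = 1) (h₀ : ∀ w ≠ 1, μ (ρ w t) = 0) :
    toLeftRegular ρ μ t = single 1 1 := by
  rw [toLeftRegular_apply, Fintype.sum_eq_single 1 fun g hg => by simp [h₀ _ (inv_ne_one.2 hg)]]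
  simp [h₁]

theorem nontrivial_coinvariants_tprod [Nontrivial E] (τ : Representation k W E)
    (ρ : Representation k W M) (t : M) (μ : M →ₗ[k] k)
    (h₁ : μ t = 1) (h₀ : ∀ w ≠ 1, μ (ρ w t) = 0) :
    Nontrivial (Coinvariants (τ.tprod ρ)) := by
  let π := ofCoinvariantsTprodLeftRegular τ ∘ₗ
    Coinvariants.map _ _ ((toLeftRegular ρ μ).lTensor τ)
  refine Function.Surjective.nontrivial (f := π) fun e => ⟨Coinvariants.mk _ (e ⊗ₜ t), ?_⟩
  simp [π, toLeftRegular_apply_eq_single_one h₁ h₀]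

end Representation

section Wreath

open PiTensorProduct

variable {G : Type} [Group G] {V : Type} [AddCommGroup V] [Module ℂ V] (ρV : Representation ℂ G V)

lemma wreathTensorAct_tprod {n : ℕ} (w : Wreath G n) (v : Fin n → V) :
    wreathTensorAct G V ρV n w (tprod ℂ v) =
      tprod ℂ fun i => ρV (w.left i) (v (w.right.symm i)) := by
  simp [wreathTensorAct]

noncomputable def wreathRep (n : ℕ) : Representation ℂ (Wreath G n) (⨂[ℂ] (_ : Fin n), V) where
  toFun := wreathTensorAct G V ρV n
  map_one' := PiTensorProduct.ext <| MultilinearMap.ext fun v => by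
    simp only [LinearMap.compMultilinearMap_apply, wreathTensorAct_tprod]
    change tprod ℂ (fun i => ρV 1 (v i)) = tprod ℂ v
    simp
  map_mul' w u := PiTensorProduct.ext <| MultilinearMap.ext fun v => by
    simp only [LinearMap.compMultilinearMap_apply, Module.End.mul_apply, wreathTensorAct_tprod]
    congr 1
    funext i
    exact LinearMap.congr_fun (map_mul ρV _ _) _

lemma wreathRep_apply {n : ℕ} (w : Wreath G n) : wreathRep ρV n w = wreathTensorAct G V ρV n w :=
  rfl

instance [Finite G] (n : ℕ) : Finite (Wreath G n) :=
  Finite.of_equiv _ SemidirectProduct.equivProd.symm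

lemma Wreath.eq_one_iff {n : ℕ} (w : Wreath G n) :
    w = 1 ↔ ∀ i, w.right.symm i = i ∧ w.left i = 1 := by
  refine ⟨fun h => h ▸ fun _ => ⟨rfl, rfl⟩, fun h => ?_⟩
  exact SemidirectProduct.ext (funext fun i => (h i).2)
    (Equiv.ext fun i => (by simpa using (h (w.right i)).1.symm : w.right i = i))

end Wreath

section FreeModule

open PiTensorProduct

variable {G : Type} [Group G] {V : Type} [AddCommGroup V] [Module ℂ V]
  {ρV : Representation ℂ G V} {d n : ℕ} (φ : V ≃ₗ[ℂ] (Fin d → G → ℂ))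

noncomputable def basisTensorCoeff (emb : Fin n → Fin d) :
    (⨂[ℂ] (_ : Fin n), V) →ₗ[ℂ] ℂ :=
  lift <| (MultilinearMap.mkPiAlgebra ℂ (Fin n) ℂ).compLinearMap fun i =>
    LinearMap.proj 1 ∘ₗ LinearMap.proj (emb i) ∘ₗ φ.toLinearMap

lemma basisTensorCoeff_tprod (emb : Fin n → Fin d) (v : Fin n → V) :
    basisTensorCoeff φ emb (tprod ℂ v) = ∏ i, φ (v i) (emb i) 1 := by
  simp [basisTensorCoeff]

variable [DecidableEq G]

noncomputable def basisVector (a : Fin d) : V :=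
  φ.symm (Pi.single a (Pi.single 1 1))

lemma basisVector_translate_coord
    (hφ : ∀ (g : G) (v : V) (i : Fin d), φ (ρV g v) i = regularRep G g (φ v i))
    (g : G) (a b : Fin d) :
    φ (ρV g (basisVector φ a)) b 1 = if a = b ∧ g = 1 then 1 else 0 := by
  rw [hφ, basisVector, LinearEquiv.apply_symm_apply]
  by_cases h : a = b <;> simp [h, eq_comm, regularRep, LinearMap.funLeft, Pi.single_apply]

noncomputable def basisTensor (emb : Fin n → Fin d) : ⨂[ℂ] (_ : Fin n), V :=
  tprod ℂ fun j => basisVector φ (emb j)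

open Classical in
lemma basisTensorCoeff_wreathRep_basisTensor
    (hφ : ∀ (g : G) (v : V) (i : Fin d), φ (ρV g v) i = regularRep G g (φ v i))
    {emb : Fin n → Fin d} (hemb : Function.Injective emb) (w : Wreath G n) :
    basisTensorCoeff φ emb (wreathRep ρV n w (basisTensor φ emb)) = if w = 1 then 1 else 0 := by
  simp only [basisTensor, wreathRep_apply, wreathTensorAct_tprod, basisTensorCoeff_tprod,
    basisVector_translate_coord φ hφ, hemb.eq_iff, Fintype.prod_boole, Wreath.eq_one_iff]
  congr

end FreeModule

lemma FDRep.nontrivial_of_simple {k W : Type*} [Field k] [Monoid W] (E : FDRep k W)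
    [CategoryTheory.Simple E] : Nontrivial E := by
  by_contra h
  rw [not_nontrivial_iff_subsingleton] at h
  exact CategoryTheory.id_nonzero E (Action.hom_ext _ _ (by ext x; exact Subsingleton.elim _ _))

lemma nontrivial_schurWeylSpace_of_coinvariants {G : Type} [Group G] {V : Type} [AddCommGroup V]
    [Module ℂ V] (ρV : Representation ℂ G V) {n : ℕ} (E : FDRep ℂ (Wreath G n))
    [Nontrivial (Representation.tprod E.ρ (wreathRep ρV n)).Coinvariants] :
    Nontrivial (schurWeylSpace G V ρV n E) := by
  refine Function.Surjective.nontrivial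
    (β := (Representation.tprod E.ρ (wreathRep ρV n)).Coinvariants)
    (Submodule.factor_surjective (Submodule.span_le.2 ?_))
  rintro _ ⟨w, e, t, rfl⟩
  exact Representation.Coinvariants.sub_mem_ker w (e ⊗ₜ t)

/-- Schur–Weyl duality for wreath products, nonvanishing part: if `E` is an irreducible
complex representation of `G ≀ S_n`, `V` is a free `G`-representation of rank `d` (i.e.
`V ≅ ℂ[G]^d` equivariantly), and `d ≥ n`, then `E ⊗_{ℂ[G≀Sₙ]} V^{⊗n} ≠ 0`. -/
theorem stmt_18 (n d : ℕ) (hdn : n ≤ d)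
    (φ : V ≃ₗ[ℂ] (Fin d → (G → ℂ)))
    (hφ : ∀ (g : G) (v : V) (i : Fin d), φ (ρV g v) i = regularRep G g (φ v i))
    (E : FDRep ℂ (Wreath G n)) (hE : CategoryTheory.Simple E) :
    Nontrivial (schurWeylSpace G V ρV n E) := by
  classical
  have := Fintype.ofFinite (Wreath G n)
  have := E.nontrivial_of_simple
  let emb := Fin.castLEEmb hdn
  have hcoeff := basisTensorCoeff_wreathRep_basisTensor φ hφ emb.injective
  have := Representation.nontrivial_coinvariants_tprod E.ρ (wreathRep ρV n)
    (basisTensor φ emb) (basisTensorCoeff φ emb) (by simpa using hcoeff 1)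
    fun w hw => by simpa [hw] using hcoeff w
  exact nontrivial_schurWeylSpace_of_coinvariants ρV E
end
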